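/- For any partition λ, λ has no hook length divisible by t if and only if the integer t does not appear as a hook length of λ. (A partition with no hook length divisible by t is called a t-core.) -/

import Mathlib

open scoped Classical

/-- An integer partition, given by its (0-indexed) sequence of parts. -/
structure IntPartition where
  parts : ℕ → ℕ
  antitone : Antitone parts
  finite_support : (Function.support parts).Finite

namespace IntPartition

/-- The weight `|λ|` of a partition: the sum of its parts. -/
noncomputable def weight (p : IntPartition) : ℕ := p.finite_support.toFinset.sum p.parts

/-- The conjugate partition, as a function: `conj j` is the number of parts `> j`. -/
noncomputable def conj (p : IntPartition) (j : ℕ) : ℕ := {i | j < p.parts i}.ncard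

/-- The cells (boxes) of the Ferrers diagram, 0-indexed. -/
def cells (p : IntPartition) : Set (ℕ × ℕ) := {c | c.2 < p.parts c.1}

lemma cells_finite (p : IntPartition) : p.cells.Finite := by
  have hsub : p.cells ⊆ (Function.support p.parts) ×ˢ (Set.Iio (p.parts 0)) := by
    rintro ⟨i, j⟩ h
    have hj : j < p.parts i := h
    constructor
    · simp only [Function.mem_support]
      omega
    · exact lt_of_lt_of_le hj (p.antitone (Nat.zero_le i))
  exact (p.finite_support.prod (Set.finite_Iio _)).subset hsub

/-- The cells of the Ferrers diagram as a finset. -/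
noncomputable def cellsFinset (p : IntPartition) : Finset (ℕ × ℕ) := p.cells_finite.toFinset

/-- Hook length of the (0-indexed) box `(i,j)`:  `λ_i - j + λ*_j - i - 1` (1-indexed formula). -/
noncomputable def hook (p : IntPartition) (i j : ℕ) : ℕ := p.parts i + p.conj j - i - j - 1

/-- The multiset of hook lengths of all boxes of `p`. -/
noncomputable def hooks (p : IntPartition) : Multiset ℕ :=
  p.cellsFinset.val.map fun c => p.hook c.1 c.2

/-- The Durfee length: the side of the largest square contained in the diagram. -/
noncomputable def durfee (p : IntPartition) : ℕ := {i | i < p.parts i}.ncard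

/-- The sign `δ_λ = (-1)^{D(λ)}`. -/
noncomputable def delta (p : IntPartition) : ℤ := (-1) ^ p.durfee

/-- Self-conjugate partitions: `λ = λ*`. -/
noncomputable def IsSelfConjugate (p : IntPartition) : Prop := ∀ j, p.conj j = p.parts j

/-- Doubled distinct partitions: `λ_i = λ*_i + 1` for `i` in the Durfee square. -/
noncomputable def IsDoubledDistinct (p : IntPartition) : Prop :=
  ∀ i < p.durfee, p.parts i = p.conj i + 1

/-- `t`-cores: partitions with no hook length divisible by `t`. -/
noncomputable def IsCore (t : ℕ) (p : IntPartition) : Prop := ∀ h ∈ p.hooks, ¬ t ∣ h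

/-- The multiset of signed hook lengths `ε_h · h`, where `ε_h = -1` for boxes strictly
above the diagonal and `1` otherwise. -/
noncomputable def signedHooks (p : IntPartition) : Multiset ℤ :=
  p.cellsFinset.val.map fun c => (if c.1 < c.2 then -1 else 1) * (p.hook c.1 c.2 : ℤ)

/-- The multiset of signed hook lengths `ε_h · h` over boxes whose hook length is a
multiple of `t`. -/
noncomputable def signedHooksT (t : ℕ) (p : IntPartition) : Multiset ℤ :=
  (p.cellsFinset.filter fun c => t ∣ p.hook c.1 c.2).val.map
    fun c => (if c.1 < c.2 then -1 else 1) * (p.hook c.1 c.2 : ℤ)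

/-- The multiset of principal hook lengths (hooks of diagonal boxes). -/
noncomputable def principalHooks (p : IntPartition) : Multiset ℕ :=
  (Finset.range p.durfee).val.map fun i => p.hook i i

lemma conj_set_finite (p : IntPartition) (j : ℕ) : {i | j < p.parts i}.Finite := by
  apply p.finite_support.subset
  intro i hi
  simp only [Set.mem_setOf_eq] at hi
  simp only [Function.mem_support]
  omega

/-- The conjugate partition, as a `Partition`. -/
noncomputable def conjugate (p : IntPartition) : IntPartition where
  parts := p.conj
  antitone := fun a b hab =>
    Set.ncard_le_ncard (fun i hi => lt_of_le_of_lt hab hi) (p.conj_set_finite a)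
  finite_support := by
    apply (Set.finite_Iio (p.parts 0)).subset
    intro j hj
    obtain ⟨i, hi⟩ := Set.nonempty_of_ncard_ne_zero hj
    exact lt_of_lt_of_le hi (p.antitone (Nat.zero_le i))

end IntPartition

/-- "Infinite" product `∏_{k ≥ 1} f k` of power series, defined coefficientwise;
this is the honest infinite product whenever `f k ≡ 1 mod X^k`. -/
noncomputable def Pinf {R : Type*} [CommRing R] (f : ℕ → PowerSeries R) : PowerSeries R :=
  PowerSeries.mk fun n => PowerSeries.coeff (R := R) n (∏ k ∈ Finset.range (n + 1), f (k + 1))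

/-- The Euler-type product `E R m = ∏_{k ≥ 1} (1 - x^{m k}) = (q^m; q^m)_∞`. -/
noncomputable def E (R : Type*) [CommRing R] (m : ℕ) : PowerSeries R :=
  Pinf fun k => 1 - PowerSeries.X ^ (m * k)

/-- The binomial series `(1 - x^m)^a` for an exponent `a` in a binomial ring. -/
noncomputable def binomSeries {R : Type*} [CommRing R] [BinomialRing R] (a : R) (m : ℕ) :
    PowerSeries R :=
  PowerSeries.mk fun n => if m ∣ n then (-1) ^ (n / m) * Ring.choose a (n / m) else 0

/-- `m` is the position of a vertical step (a `0`) in the canonical bi-infinite binary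
word of the partition `p`. -/
def zeroPos (p : IntPartition) (m : ℤ) : Prop := ∃ i : ℕ, (p.parts i : ℤ) - i - 1 = m

/-- The Littlewood decomposition, as a relation: `core` and `quot` are the `t`-core and
`t`-quotient of `lam`, expressed via the binary-word encoding: the `k`-th subsequence of
the word of `lam` is the word of `quot k` (up to the shift `s k`), and the `k`-th
subsequence of the word of `core` is the corresponding flushed word `...000111...` with
the same charge. -/
def IsLittlewood (t : ℕ) (lam core : IntPartition) (quot : ℕ → IntPartition) : Prop :=
  ∃ s : ℕ → ℤ,
    (∀ k < t, ∀ j : ℤ, zeroPos (quot k) j ↔ zeroPos lam (t * (j + s k) + k)) ∧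
    (∀ k < t, ∀ j : ℤ, zeroPos core (t * (j + s k) + k) ↔ j < 0)

/-!
Abacus argument. Reading the boundary of the diagram as a bi-infinite binary word, row `i`
contributes a zero at position `λᵢ - i - 1` and column `j` a one at position `j - λ*ⱼ`; every
integer is exactly one of the two, and the hook lengths are exactly the positive differences
`(zero position) - (one position)`. A hook of length `m t` thus joins a one at `c` to a zero at
`c + m t`; along `c, c + t, …, c + m t` some step goes from a one to a zero, and that pair is a
hook of length `t`.
-/

namespace IntPartition

/-- `zeroPos p m` holds exactly when `m` is some `p.beta i`. -/
def beta (p : IntPartition) (i : ℕ) : ℤ := p.parts i - i - 1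

noncomputable def coBeta (p : IntPartition) (j : ℕ) : ℤ := j - p.conj j

variable (p : IntPartition)

lemma lt_conj_of_lt_parts {i j : ℕ} (h : j < p.parts i) : i < p.conj j := by
  have hsub : Set.Iio (i + 1) ⊆ {i' | j < p.parts i'} := fun i' hi' =>
    h.trans_le (p.antitone (Nat.lt_succ_iff.mp hi'))
  simpa [conj] using Set.ncard_le_ncard hsub (p.conj_set_finite j)

lemma conj_le_of_parts_le {i j : ℕ} (h : p.parts i ≤ j) : p.conj j ≤ i := by
  have hsub : {i' | j < p.parts i'} ⊆ Set.Iio i := fun i' hi' =>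
    lt_of_not_ge fun hi => (h.trans_lt hi').not_ge (p.antitone hi)
  simpa [conj] using Set.ncard_le_ncard hsub (Set.finite_Iio i)

lemma coBeta_lt_beta_iff {i j : ℕ} : p.coBeta j < p.beta i ↔ j < p.parts i := by
  constructor
  · intro h
    by_contra! hj
    have := p.conj_le_of_parts_le hj
    unfold beta coBeta at h
    omega
  · intro h
    have := p.lt_conj_of_lt_parts h
    unfold beta coBeta
    omega

lemma beta_ne_coBeta (i j : ℕ) : p.beta i ≠ p.coBeta j := by
  rcases lt_or_ge j (p.parts i) with h | h
  · exact (p.coBeta_lt_beta_iff.2 h).ne'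
  · have := p.conj_le_of_parts_le h
    unfold beta coBeta
    omega

lemma hook_eq_beta_sub_coBeta {i j : ℕ} (h : j < p.parts i) :
    (p.hook i j : ℤ) = p.beta i - p.coBeta j := by
  have := p.lt_conj_of_lt_parts h
  unfold hook beta coBeta
  omega

lemma exists_coBeta_eq {m : ℤ} (hm : ∀ i, p.beta i ≠ m) : ∃ j, p.coBeta j = m := by
  have hex : ∃ n, p.beta n < m :=
    ⟨p.parts 0 + m.natAbs, by
      have := p.antitone (Nat.zero_le (p.parts 0 + m.natAbs))
      unfold beta
      omega⟩
  obtain ⟨n, hbelow, habove⟩ : ∃ n, p.beta n < m ∧ ∀ i < n, m < p.beta i :=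
    ⟨Nat.find hex, Nat.find_spec hex, fun i hi =>
      lt_of_le_of_ne (not_lt.1 (Nat.find_min hex hi)) (hm i).symm⟩
  unfold beta at hbelow
  -- the `n` rows whose zero lies above `m` are exactly the rows meeting column `m + n`
  have hrows : {i | (m + n).toNat < p.parts i} = Set.Iio n := by
    ext i
    simp only [Set.mem_ofPred_eq, Set.mem_Iio]
    constructor
    · intro h
      by_contra! hi
      have := p.antitone hi
      omega
    · intro hi
      have hlast := habove (n - 1) (by omega)
      have := p.antitone (show i ≤ n - 1 by omega)
      unfold beta at hlast
      omega
  refine ⟨(m + n).toNat, ?_⟩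
  rw [coBeta, conj, hrows, Set.ncard_Iio_nat]
  omega

lemma mem_hooks_iff {h : ℕ} : h ∈ p.hooks ↔ 0 < h ∧ ∃ i j, p.beta i - p.coBeta j = h := by
  simp only [hooks, cellsFinset, Multiset.mem_map, Finset.mem_val, Set.Finite.mem_toFinset,
    cells, Set.mem_ofPred_eq, Prod.exists]
  constructor
  · rintro ⟨i, j, hij, rfl⟩
    have hhook := p.hook_eq_beta_sub_coBeta hij
    have hlt := p.coBeta_lt_beta_iff.2 hij
    exact ⟨by omega, i, j, hhook.symm⟩
  · rintro ⟨hpos, i, j, hij⟩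
    have hcell : j < p.parts i := p.coBeta_lt_beta_iff.1 (by omega)
    have hhook := p.hook_eq_beta_sub_coBeta hcell
    exact ⟨i, j, hcell, by omega⟩

lemma mem_hooks_of_dvd {t h : ℕ} (hh : h ∈ p.hooks) (hdvd : t ∣ h) : t ∈ p.hooks := by
  obtain ⟨hpos, i, j, hij⟩ := p.mem_hooks_iff.1 hh
  obtain ⟨m, rfl⟩ := hdvd
  have ht : 0 < t := Nat.pos_of_mul_pos_right hpos
  obtain ⟨k, hk, ⟨i', hi'⟩⟩ := Nat.exists_not_and_succ_of_not_zero_of_exists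
    (p := fun k : ℕ => ∃ i, p.beta i = p.coBeta j + k * t)
    (by simpa using fun i => p.beta_ne_coBeta i j)
    ⟨m, i, by push_cast at hij; linarith⟩
  obtain ⟨j', hj'⟩ := p.exists_coBeta_eq (not_exists.1 hk)
  refine p.mem_hooks_iff.2 ⟨ht, i', j', ?_⟩
  rw [hi', hj']
  push_cast
  ring

end IntPartition

theorem core_iff_no_hook_t_general (t : ℕ) (p : IntPartition) :
    (∀ h ∈ p.hooks, ¬ t ∣ h) ↔ t ∉ p.hooks :=
  ⟨fun H ht => H t ht dvd_rfl, fun H _ hh hdvd => H (p.mem_hooks_of_dvd hh hdvd)⟩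

theorem core_iff_no_hook_t (t : ℕ) (ht : 0 < t) (p : IntPartition) :
    (∀ h ∈ p.hooks, ¬ t ∣ h) ↔ t ∉ p.hooks :=
  core_iff_no_hook_t_general t p
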